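/- Let D=(V,A) be a digraph, c: A → Z≥0, and w: V → Z≥0 such that every node v with w(v) > 0 lies on a di-circuit. Then the minimum of Σ_K y(K)·c̃(K) over nonnegative integer functions y on di-circuits satisfying Σ{y(K): v ∈ V(K)} ≥ w(v) for all v equals the maximum of Σ_v w(v)·z(v) over nonnegative integer vectors z: V → Z≥0 satisfying Σ{z(v): v ∈ V(K)} ≤ c̃(K) for every di-circuit K (Gallai's theorem). -/

import Mathlib

open scoped BigOperators

noncomputable section

variable {V : Type*}

/-- No edge of `A` leaves `Z`. -/
def NoLeaving (A : Set (V × V)) (Z : Set V) : Prop :=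
  ∀ e ∈ A, e.1 ∈ Z → e.2 ∈ Z

/-- The set of edges of `A` entering `Z`. -/
def dicutOf (A : Set (V × V)) (Z : Set V) : Set (V × V) :=
  {e ∈ A | e.2 ∈ Z ∧ e.1 ∉ Z}

/-- `B` is a directed cut of the digraph with edge set `A`. -/
def IsDicut (A B : Set (V × V)) : Prop :=
  ∃ Z : Set V, NoLeaving A Z ∧ B = dicutOf A Z

/-- `F` is the union of pairwise disjoint dicuts of `A`. -/
def IsDisjointDicutUnion (A F : Set (V × V)) : Prop :=
  ∃ 𝓑 : Set (Set (V × V)), (∀ B ∈ 𝓑, IsDicut A B) ∧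
    𝓑.Pairwise Disjoint ∧ F = ⋃₀ 𝓑

/-- The digraph obtained from `A` by reversing the edges of `F`. -/
def rev (A F : Set (V × V)) : Set (V × V) :=
  (A \ F) ∪ Prod.swap '' F

/-- `v` is a sink of the digraph `A`: no edge leaves `v`. -/
def IsSinkIn (A : Set (V × V)) (v : V) : Prop := ∀ u, (v, u) ∉ A

/-- `S` is a stable set of the digraph `A`. -/
def Stable (A : Set (V × V)) (S : Set V) : Prop :=
  ∀ u ∈ S, ∀ v ∈ S, (u, v) ∉ A

/-- `S` is sink-stable: there are pairwise disjoint dicuts whose reorientation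
turns every element of `S` into a sink. -/
def SinkStable (A : Set (V × V)) (S : Set V) : Prop :=
  ∃ F, IsDisjointDicutUnion A F ∧ ∀ s ∈ S, IsSinkIn (rev A F) s

/-- `S` is `F`-stable : sink-stable in the digraph where `F` is reversed. -/
def FStable (A F : Set (V × V)) (S : Set V) : Prop :=
  SinkStable (rev A F) S

/-- A circuit of the digraph `A`: a cycle of the underlying undirected graph,
with a fixed traversal direction; `dir i = true` iff the `i`-th edge is a
forward edge. -/
structure Circuit (A : Set (V × V)) where
  n : ℕ
  hn : 2 ≤ n
  f : ZMod n → V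
  inj : Function.Injective f
  dir : ZMod n → Bool
  mem : ∀ i : ZMod n, (if dir i then (f i, f (i + 1)) else (f (i + 1), f i)) ∈ A
  edge_inj : Function.Injective
    (fun i : ZMod n => if dir i then (f i, f (i + 1)) else (f (i + 1), f i))

namespace Circuit

variable {A : Set (V × V)}

/-- The edge of the digraph used at step `i` of the circuit. -/
def edge (C : Circuit A) (i : ZMod C.n) : V × V :=
  if C.dir i then (C.f i, C.f (i + 1)) else (C.f (i + 1), C.f i)

/-- The node set of the circuit. -/
def verts (C : Circuit A) : Set V := Set.range C.f

/-- The number of forward edges of `C` lying in `F`. -/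
def fwdCount (C : Circuit A) (F : Set (V × V)) : ℕ :=
  {i : ZMod C.n | C.dir i = true ∧ C.edge i ∈ F}.ncard

/-- The number of backward edges of `C` lying in `F`. -/
def bwdCount (C : Circuit A) (F : Set (V × V)) : ℕ :=
  {i : ZMod C.n | C.dir i = false ∧ C.edge i ∈ F}.ncard

/-- The number of forward edges of `C`. -/
def fwd (C : Circuit A) : ℕ := {i : ZMod C.n | C.dir i = true}.ncard

/-- The number of backward edges of `C`. -/
def bwd (C : Circuit A) : ℕ := {i : ZMod C.n | C.dir i = false}.ncard

/-- `η(C)`, the minimum of the numbers of forward and backward edges. -/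
def eta (C : Circuit A) : ℕ := min C.fwd C.bwd

end Circuit

/-- A directed circuit (di-circuit) of the digraph `A`. -/
structure DiCircuit (A : Set (V × V)) where
  n : ℕ
  hn : 2 ≤ n
  f : ZMod n → V
  inj : Function.Injective f
  mem : ∀ i : ZMod n, (f i, f (i + 1)) ∈ A

namespace DiCircuit

variable {A : Set (V × V)}

/-- The node set of the di-circuit. -/
def verts (K : DiCircuit A) : Set V := Set.range K.f

/-- The edge set of the di-circuit. -/
def edges (K : DiCircuit A) : Set (V × V) :=
  {e | ∃ i : ZMod K.n, e = (K.f i, K.f (i + 1))}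

/-- The total `c`-cost of the edges of the di-circuit. -/
def cost (K : DiCircuit A) (c : V × V → ℕ) : ℕ :=
  ∑ i ∈ Finset.range K.n, c (K.f (i : ZMod K.n), K.f ((i : ZMod K.n) + 1))

/-- The sum of `z` over the nodes of the di-circuit. -/
def vsum (K : DiCircuit A) (z : V → ℕ) : ℕ :=
  ∑ i ∈ Finset.range K.n, z (K.f (i : ZMod K.n))

end DiCircuit

/-- The digraph `A` is acyclic: it has no closed directed walk. -/
def Acyclic (A : Set (V × V)) : Prop :=
  ∀ (p : ℕ → V) (m : ℕ), 0 < m → (∀ i < m, (p i, p (i + 1)) ∈ A) → p m ≠ p 0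

/-- The digraph `A` is strongly connected. -/
def StronglyConnected (A : Set (V × V)) : Prop :=
  ∀ u v : V, Relation.ReflTransGen (fun x y => (x, y) ∈ A) u v

/-- `F` is flat: every cyclic edge of `A` lies on a di-circuit containing
exactly one element of `F`. -/
def Flat (A F : Set (V × V)) : Prop :=
  ∀ e ∈ A, (∃ K : DiCircuit A, e ∈ K.edges) →
    ∃ K : DiCircuit A, e ∈ K.edges ∧ (K.edges ∩ F).ncard = 1

/-- `F` is a transversal of di-circuits: it meets every di-circuit. -/
def Transversal (A F : Set (V × V)) : Prop :=
  ∀ K : DiCircuit A, (K.edges ∩ F).Nonempty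


/-! ### Auxiliary development for `stmt14` -/

section Helpers
open Finset

lemma sum_range_zmod {M : Type*} [AddCommMonoid M] {n : ℕ} [NeZero n] (g : ZMod n → M) :
    ∑ i ∈ Finset.range n, g (i : ZMod n) = ∑ i : ZMod n, g i := by
  refine Finset.sum_nbij' (fun i => (i : ZMod n)) (fun j => j.val) ?_ ?_ ?_ ?_ ?_
  · intro a _; exact Finset.mem_univ _
  · intro a _; exact Finset.mem_range.mpr (ZMod.val_lt a)
  · intro a ha; exact ZMod.val_cast_of_lt (Finset.mem_range.mp ha)
  · intro a _; exact ZMod.natCast_zmod_val a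
  · intro a _; rfl

namespace DiCircuit
variable {A : Set (V × V)}

lemma npos (K : DiCircuit A) : 0 < K.n := lt_of_lt_of_le two_pos K.hn

instance (K : DiCircuit A) : NeZero K.n := ⟨K.npos.ne'⟩

lemma one_ne_zero' (K : DiCircuit A) : (1 : ZMod K.n) ≠ 0 := by
  haveI : Fact (1 < K.n) := ⟨K.hn⟩
  exact one_ne_zero

lemma loopless (K : DiCircuit A) (i : ZMod K.n) : K.f i ≠ K.f (i + 1) := by
  intro h
  have := K.inj h
  have : (1 : ZMod K.n) = 0 := by
    have := left_eq_add.mp this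
    exact this
  exact K.one_ne_zero' this

lemma edge_fun_inj (K : DiCircuit A) :
    Function.Injective (fun i : ZMod K.n => (K.f i, K.f (i + 1))) := by
  intro a b h
  exact K.inj (congrArg Prod.fst h)

lemma cost_eq (K : DiCircuit A) (c : V × V → ℕ) :
    K.cost c = ∑ i : ZMod K.n, c (K.f i, K.f (i + 1)) :=
  sum_range_zmod (fun i : ZMod K.n => c (K.f i, K.f (i + 1)))

lemma vsum_eq (K : DiCircuit A) (z : V → ℕ) :
    K.vsum z = ∑ i : ZMod K.n, z (K.f i) :=
  sum_range_zmod (fun i : ZMod K.n => z (K.f i))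

lemma mem_edges (K : DiCircuit A) (i : ZMod K.n) : (K.f i, K.f (i+1)) ∈ K.edges := ⟨i, rfl⟩

lemma edges_sub (K : DiCircuit A) : K.edges ⊆ A := by
  rintro e ⟨i, rfl⟩; exact K.mem i

lemma edges_loopless (K : DiCircuit A) {e : V × V} (he : e ∈ K.edges) : e.1 ≠ e.2 := by
  obtain ⟨i, rfl⟩ := he; exact K.loopless i

end DiCircuit
end Helpers

section Main
open Classical Finset
variable [Fintype V]

variable {A : Set (V × V)}

/-- coverage of node `v` by the circuit family `y`. -/
def cov (y : DiCircuit A →₀ ℕ) (v : V) : ℕ :=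
  y.sum fun K a => K.verts.indicator (fun _ => a) v

/-- total cost of the circuit family `y`. -/
def ycost (c : V × V → ℕ) (y : DiCircuit A →₀ ℕ) : ℕ :=
  y.sum fun K a => a * K.cost c

/-- flow on edge `e` induced by the circuit family `y`. -/
def eflow (y : DiCircuit A →₀ ℕ) (e : V × V) : ℕ :=
  y.sum fun K a => if e ∈ K.edges then a else 0

namespace DiCircuit

lemma in_count (K : DiCircuit A) (v : V) :
    (∑ u : V, if (u, v) ∈ K.edges then (1:ℕ) else 0) = if v ∈ K.verts then 1 else 0 := by
  by_cases hv : v ∈ K.verts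
  · obtain ⟨j, rfl⟩ := hv
    rw [if_pos ⟨j, rfl⟩]
    have key : ∀ u : V, ((u, K.f j) ∈ K.edges) ↔ u = K.f (j - 1) := by
      intro u
      constructor
      · rintro ⟨i, hi⟩
        have h1 : u = K.f i := congrArg Prod.fst hi
        have h2 : K.f j = K.f (i + 1) := congrArg Prod.snd hi
        have : j = i + 1 := K.inj h2
        subst this; rw [h1]; congr 1; ring
      · rintro rfl
        refine ⟨j - 1, ?_⟩
        simp
    simp only [key]
    simp
  · rw [if_neg hv]
    refine Finset.sum_eq_zero fun u _ => ?_
    rw [if_neg]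
    rintro ⟨i, hi⟩
    exact hv ⟨i + 1, (congrArg Prod.snd hi).symm⟩

lemma out_count (K : DiCircuit A) (v : V) :
    (∑ u : V, if (v, u) ∈ K.edges then (1:ℕ) else 0) = if v ∈ K.verts then 1 else 0 := by
  by_cases hv : v ∈ K.verts
  · obtain ⟨j, rfl⟩ := hv
    rw [if_pos ⟨j, rfl⟩]
    have key : ∀ u : V, ((K.f j, u) ∈ K.edges) ↔ u = K.f (j + 1) := by
      intro u
      constructor
      · rintro ⟨i, hi⟩
        have h1 : K.f j = K.f i := congrArg Prod.fst hi
        have h2 : u = K.f (i + 1) := congrArg Prod.snd hi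
        have : j = i := K.inj h1
        subst this; exact h2
      · rintro rfl; exact ⟨j, rfl⟩
    simp only [key]
    simp
  · rw [if_neg hv]
    refine Finset.sum_eq_zero fun u _ => ?_
    rw [if_neg]
    rintro ⟨i, hi⟩
    exact hv ⟨i, (congrArg Prod.fst hi).symm⟩

lemma cost_eq_sum_edges (K : DiCircuit A) (c : V × V → ℕ) :
    K.cost c = ∑ e : V × V, if e ∈ K.edges then c e else 0 := by
  have himg : Finset.univ.filter (· ∈ K.edges) =
      Finset.image (fun i : ZMod K.n => (K.f i, K.f (i + 1))) Finset.univ := by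
    ext e
    simp only [Finset.mem_filter, Finset.mem_univ, true_and, Finset.mem_image]
    constructor
    · rintro ⟨i, rfl⟩; exact ⟨i, rfl⟩
    · rintro ⟨i, rfl⟩; exact ⟨i, rfl⟩
  rw [K.cost_eq c, ← Finset.sum_filter, himg,
    Finset.sum_image (fun a _ b _ h => K.edge_fun_inj h)]

lemma vsum_eq_sum_verts (K : DiCircuit A) (z : V → ℕ) :
    K.vsum z = ∑ v : V, if v ∈ K.verts then z v else 0 := by
  have himg : Finset.univ.filter (· ∈ K.verts) =
      Finset.image K.f Finset.univ := by
    ext v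
    simp only [Finset.mem_filter, Finset.mem_univ, true_and, Finset.mem_image]
    constructor
    · rintro ⟨i, rfl⟩; exact ⟨i, rfl⟩
    · rintro ⟨i, rfl⟩; exact ⟨i, rfl⟩
  rw [K.vsum_eq z, ← Finset.sum_filter, himg,
    Finset.sum_image (fun a _ b _ h => K.inj h)]

end DiCircuit

lemma eflow_in (y : DiCircuit A →₀ ℕ) (v : V) :
    ∑ u : V, eflow y (u, v) = cov y v := by
  unfold eflow cov Finsupp.sum
  rw [Finset.sum_comm]
  refine Finset.sum_congr rfl fun K _ => ?_
  simp only [Set.indicator_apply]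
  have : ∀ u : V, (if (u, v) ∈ K.edges then y K else 0)
      = y K * (if (u, v) ∈ K.edges then (1:ℕ) else 0) := by
    intro u; split <;> simp
  simp only [this, ← Finset.mul_sum, K.in_count v]
  split <;> simp

lemma eflow_out (y : DiCircuit A →₀ ℕ) (v : V) :
    ∑ u : V, eflow y (v, u) = cov y v := by
  unfold eflow cov Finsupp.sum
  rw [Finset.sum_comm]
  refine Finset.sum_congr rfl fun K _ => ?_
  simp only [Set.indicator_apply]
  have : ∀ u : V, (if (v, u) ∈ K.edges then y K else 0)
      = y K * (if (v, u) ∈ K.edges then (1:ℕ) else 0) := by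
    intro u; split <;> simp
  simp only [this, ← Finset.mul_sum, K.out_count v]
  split <;> simp

lemma ycost_eq_flow (c : V × V → ℕ) (y : DiCircuit A →₀ ℕ) :
    ycost c y = ∑ e : V × V, c e * eflow y e := by
  unfold ycost eflow Finsupp.sum
  simp only [Finset.mul_sum]
  rw [Finset.sum_comm]
  refine Finset.sum_congr rfl fun K _ => ?_
  rw [K.cost_eq_sum_edges c, Finset.mul_sum]
  refine Finset.sum_congr rfl fun e _ => ?_
  split <;> ring

lemma eflow_supp {y : DiCircuit A →₀ ℕ} {e : V × V} (h : 0 < eflow y e) :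
    e ∈ A ∧ e.1 ≠ e.2 := by
  unfold eflow Finsupp.sum at h
  obtain ⟨K, -, hK⟩ := Finset.exists_ne_zero_of_sum_ne_zero h.ne'
  have hKe : e ∈ K.edges := by by_contra hc; simp [hc] at hK
  exact ⟨K.edges_sub hKe, K.edges_loopless hKe⟩

/-- Weak duality. -/
lemma weak_duality (c : V × V → ℕ) (w : V → ℕ) (y : DiCircuit A →₀ ℕ) (z : V → ℕ)
    (hy : ∀ v, w v ≤ cov y v) (hz : ∀ K : DiCircuit A, K.vsum z ≤ K.cost c) :
    ∑ v : V, w v * z v ≤ ycost c y := by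
  calc ∑ v : V, w v * z v ≤ ∑ v : V, cov y v * z v := by
        refine Finset.sum_le_sum fun v _ => Nat.mul_le_mul_right _ (hy v)
    _ = ∑ v : V, (y.sum fun K a => K.verts.indicator (fun _ => a) v) * z v := rfl
    _ = y.sum fun K a => a * K.vsum z := by
        unfold Finsupp.sum
        simp only [Finset.sum_mul]
        rw [Finset.sum_comm]
        refine Finset.sum_congr rfl fun K _ => ?_
        rw [K.vsum_eq_sum_verts z, Finset.mul_sum]
        refine Finset.sum_congr rfl fun v _ => ?_
        simp only [Set.indicator_apply]
        split <;> ring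
    _ ≤ y.sum fun K a => a * K.cost c :=
        Finsupp.sum_le_sum fun K _ => Nat.mul_le_mul_left _ (hz K)
    _ = ycost c y := rfl

end Main

section Decomp
open Classical Finset
variable [Fintype V] {A : Set (V × V)}

/-- From a nowhere-zero circulation extract a di-circuit in its support. -/
lemma exists_dicircuit_of_circulation (x : V × V → ℕ)
    (hsupp : ∀ e, 0 < x e → e ∈ A ∧ e.1 ≠ e.2)
    (hcons : ∀ v : V, (∑ u : V, x (u, v)) = ∑ u : V, x (v, u))
    (hne : ∃ e, 0 < x e) :
    ∃ K : DiCircuit A, ∀ e ∈ K.edges, 0 < x e := by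
  -- the set of nodes with positive outflow
  set S : Set V := {v : V | ∃ u, 0 < x (v, u)} with hS
  have hstep : ∀ v : S, ∃ u : S, 0 < x (v.1, u.1) := by
    rintro ⟨v, u, hu⟩
    have hin : 0 < ∑ t : V, x (t, u) := by
      refine lt_of_lt_of_le hu ?_
      exact Finset.single_le_sum (f := fun t => x (t, u)) (fun t _ => Nat.zero_le _)
        (Finset.mem_univ v)
    rw [hcons] at hin
    obtain ⟨u', -, hu'⟩ := Finset.exists_ne_zero_of_sum_ne_zero hin.ne'
    exact ⟨⟨u, u', Nat.pos_of_ne_zero hu'⟩, hu⟩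
  choose stepf hstepf using hstep
  obtain ⟨e₀, he₀⟩ := hne
  have hv₀ : e₀.1 ∈ S := ⟨e₀.2, by simpa using he₀⟩
  set q : ℕ → S := fun n => stepf^[n] ⟨e₀.1, hv₀⟩ with hqdef
  set p : ℕ → V := fun n => (q n).1 with hpdef
  have hp : ∀ n, 0 < x (p n, p (n + 1)) := by
    intro n
    have h1 : q (n + 1) = stepf (q n) := Function.iterate_succ_apply' stepf n _
    show 0 < x ((q n).1, (q (n + 1)).1)
    rw [h1]
    exact hstepf (q n)
  -- pigeonhole: some value repeats
  have hrep : ∃ j, ∃ i < j, p i = p j := by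
    obtain ⟨a, b, hab, heq⟩ := Fintype.exists_ne_map_eq_of_card_lt
      (fun i : Fin (Fintype.card V + 1) => p i) (by simp)
    rcases lt_or_gt_of_ne (fun h : (a:ℕ) = (b:ℕ) => hab (Fin.ext h)) with h | h
    · exact ⟨b, a, h, heq⟩
    · exact ⟨a, b, h, heq.symm⟩
  set jm := Nat.find hrep with hjm
  obtain ⟨i, hij, hpij⟩ := Nat.find_spec hrep
  have hinj : ∀ a b, a < jm → b < jm → p a = p b → a = b := by
    intro a b ha hb hab
    by_contra hne'
    rcases lt_or_gt_of_ne hne' with h | h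
    · exact Nat.find_min hrep hb ⟨a, h, hab⟩
    · exact Nat.find_min hrep ha ⟨b, h, hab.symm⟩
  set n := jm - i with hn
  have hjmi : jm = i + n := by omega
  have hn1 : 1 ≤ n := by omega
  have hn2 : 2 ≤ n := by
    rcases Nat.lt_or_ge n 2 with h | h
    · exfalso
      have hn1' : n = 1 := by omega
      have : p i = p (i + 1) := by rw [hpij]; congr 1; omega
      exact (hsupp _ (hp i)).2 (by simpa using this)
    · exact h
  haveI : NeZero n := ⟨by omega⟩
  haveI : Fact (1 < n) := ⟨hn2⟩
  set f : ZMod n → V := fun q => p (i + q.val) with hf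
  have hkey : ∀ q : ZMod n, (f q, f (q + 1)) = (p (i + q.val), p (i + q.val + 1)) := by
    intro q
    have hval : (q + 1).val = (q.val + 1) % n := by
      rw [ZMod.val_add, ZMod.val_one]
    rcases Nat.lt_or_ge (q.val + 1) n with h | h
    · rw [hf]; simp only [hval, Nat.mod_eq_of_lt h, Nat.add_assoc]
    · have hqn : q.val + 1 = n := by
        have := ZMod.val_lt q
        omega
      rw [hf]; simp only [hval, hqn, Nat.mod_self]
      have : p (i + 0) = p (i + q.val + 1) := by
        have : i + q.val + 1 = jm := by omega
        rw [this]
        simpa using hpij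
      rw [this]
  have hinjf : Function.Injective f := by
    intro a b hab
    have ha := ZMod.val_lt a
    have hb := ZMod.val_lt b
    have := hinj (i + a.val) (i + b.val) (by omega) (by omega) hab
    have : a.val = b.val := by omega
    exact ZMod.val_injective n this
  have hmem : ∀ q : ZMod n, (f q, f (q + 1)) ∈ A := by
    intro q
    rw [hkey q]
    exact (hsupp _ (hp _)).1
  refine ⟨⟨n, hn2, f, hinjf, hmem⟩, ?_⟩
  rintro e ⟨q, rfl⟩
  show 0 < x (f q, f (q + 1))
  rw [hkey q]
  exact hp _

/-- Flow decomposition: any loopless integral circulation supported in `A`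
is the edge flow of a finitely supported family of di-circuits. -/
lemma decompose_circulation (N : ℕ) : ∀ (x : V × V → ℕ),
    (∑ e : V × V, x e) = N →
    (∀ e, 0 < x e → e ∈ A ∧ e.1 ≠ e.2) →
    (∀ v : V, (∑ u : V, x (u, v)) = ∑ u : V, x (v, u)) →
    ∃ y : DiCircuit A →₀ ℕ, ∀ e, eflow y e = x e := by
  induction N using Nat.strong_induction_on with
  | _ N ih =>
    intro x hsum hsupp hcons
    by_cases hzero : ∀ e, x e = 0
    · refine ⟨0, fun e => ?_⟩
      simp [eflow, hzero e]
    · push_neg at hzero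
      obtain ⟨e₀, he₀⟩ := hzero
      obtain ⟨K, hK⟩ := exists_dicircuit_of_circulation x hsupp hcons
        ⟨e₀, Nat.pos_of_ne_zero he₀⟩
      set g : V × V → ℕ := fun e => if e ∈ K.edges then 1 else 0 with hg
      have hle : ∀ e, g e ≤ x e := by
        intro e
        simp only [hg]
        split
        · exact Nat.one_le_iff_ne_zero.mpr (hK e (by assumption)).ne'
        · exact Nat.zero_le _
      set x₁ : V × V → ℕ := fun e => x e - g e with hx₁
      have hx₁e : ∀ e, x₁ e = x e - g e := fun e => rfl
      have hsupp₁ : ∀ e, 0 < x₁ e → e ∈ A ∧ e.1 ≠ e.2 := by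
        intro e he
        exact hsupp e (lt_of_lt_of_le he (Nat.sub_le _ _))
      have hgsum_in : ∀ v, (∑ u : V, g (u, v)) = if v ∈ K.verts then 1 else 0 :=
        fun v => K.in_count v
      have hgsum_out : ∀ v, (∑ u : V, g (v, u)) = if v ∈ K.verts then 1 else 0 :=
        fun v => K.out_count v
      have hcons₁ : ∀ v : V, (∑ u : V, x₁ (u, v)) = ∑ u : V, x₁ (v, u) := by
        intro v
        rw [show (∑ u : V, x₁ (u, v)) = ∑ u : V, (x (u, v) - g (u, v)) from rfl]
        rw [show (∑ u : V, x₁ (v, u)) = ∑ u : V, (x (v, u) - g (v, u)) from rfl]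
        rw [Finset.sum_tsub_distrib Finset.univ (fun u _ => hle (u, v)),
            Finset.sum_tsub_distrib Finset.univ (fun u _ => hle (v, u)),
            hcons v, hgsum_in, hgsum_out]
      have hgpos : 0 < ∑ e : V × V, g e := by
        have h1 : g (K.f 0, K.f 1) = 1 := by
          simp only [hg]
          rw [if_pos]
          exact ⟨0, by rw [zero_add]⟩
        calc (0:ℕ) < 1 := one_pos
          _ = g (K.f 0, K.f 1) := h1.symm
          _ ≤ ∑ e : V × V, g e := Finset.single_le_sum
              (f := g) (fun e _ => Nat.zero_le _) (Finset.mem_univ _)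
      have hsum₁ : (∑ e : V × V, x₁ e) = N - ∑ e : V × V, g e := by
        rw [show (∑ e : V × V, x₁ e) = ∑ e : V × V, (x e - g e) from rfl,
          Finset.sum_tsub_distrib Finset.univ (fun e _ => hle e), hsum]
      have hNpos : 0 < N := by
        rw [← hsum]
        calc (0:ℕ) < x e₀ := Nat.pos_of_ne_zero he₀
          _ ≤ _ := Finset.single_le_sum (f := x) (fun e _ => Nat.zero_le _)
              (Finset.mem_univ _)
      have hlt : (∑ e : V × V, x₁ e) < N := by
        rw [hsum₁]
        exact Nat.sub_lt hNpos hgpos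
      obtain ⟨y₁, hy₁⟩ := ih _ hlt x₁ rfl hsupp₁ hcons₁
      refine ⟨y₁ + Finsupp.single K 1, fun e => ?_⟩
      have hadd : eflow (y₁ + Finsupp.single K 1) e
          = eflow y₁ e + eflow (Finsupp.single K 1) e := by
        unfold eflow
        exact Finsupp.sum_add_index' (fun L => by simp) (fun L a b => by split <;> simp)
      have hsingle : eflow (Finsupp.single K 1) e = g e := by
        unfold eflow
        rw [Finsupp.sum_single_index (by simp)]
      rw [hadd, hsingle, hy₁ e, hx₁e e, Nat.sub_add_cancel (hle e)]
end Decomp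

section Potential
open Classical Finset

variable {W : Type*}

/-- `p` is a walk of length `L` in the digraph `R`. -/
def IsWalk (R : W → W → Prop) (p : ℕ → W) (L : ℕ) : Prop :=
  ∀ i < L, R (p i) (p (i + 1))

/-- cost of the length-`L` walk `p`. -/
def wcost (k : W → W → ℤ) (p : ℕ → W) (L : ℕ) : ℤ :=
  ∑ i ∈ Finset.range L, k (p i) (p (i + 1))

lemma splice (R : W → W → Prop) (k : W → W → ℤ) (p : ℕ → W) (L i j : ℕ)
    (hij : i < j) (hjL : j ≤ L) (hw : IsWalk R p L) (hpij : p i = p j) :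
    IsWalk R (fun s => if s < i then p s else p (s + (j - i))) (L - (j - i)) ∧
    (fun s => if s < i then p s else p (s + (j - i))) (L - (j - i)) = p L ∧
    (fun s => if s < i then p s else p (s + (j - i))) 0 = p 0 ∧
    wcost k (fun s => if s < i then p s else p (s + (j - i))) (L - (j - i)) +
      wcost k (fun s => p (i + s)) (j - i) = wcost k p L := by
  set d := j - i with hd
  have hd1 : 1 ≤ d := by omega
  set r : ℕ → W := fun s => if s < i then p s else p (s + d) with hr
  have hrval : ∀ s, i ≤ s → r s = p (s + d) := by
    intro s hs; simp only [hr]; rw [if_neg (by omega)]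
  have hrval2 : ∀ s, s < i → r s = p s := by
    intro s hs; simp only [hr]; rw [if_pos hs]
  have hri : r i = p i := by
    rw [hrval i le_rfl]
    have : i + d = j := by omega
    rw [this, hpij]
  -- pointwise equality of successor values
  have hstep : ∀ s, s < i → r (s + 1) = p (s + 1) := by
    intro s hs
    rcases Nat.lt_or_ge (s + 1) i with h | h
    · exact hrval2 _ h
    · have : s + 1 = i := by omega
      rw [this, hri]
  constructor
  · intro s hs
    rcases Nat.lt_or_ge s i with h | h
    · have h1 := hrval2 s h
      have h2 := hstep s h
      rw [h1, h2]
      exact hw s (by omega)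
    · rw [hrval s h, hrval (s + 1) (by omega)]
      have : s + 1 + d = s + d + 1 := by omega
      rw [this]
      exact hw (s + d) (by omega)
  refine ⟨?_, ?_, ?_⟩
  · rcases Nat.lt_or_ge (L - d) i with h | h
    · exfalso; omega
    · rw [hrval _ h]
      congr 1; omega
  · rcases Nat.lt_or_ge 0 i with h | h
    · exact hrval2 0 h
    · have hi0 : i = 0 := by omega
      rw [hrval 0 (by omega)]
      have : 0 + d = j := by omega
      rw [this, ← hpij, hi0]
  · -- cost identity
    have hsplit1 : wcost k p L
        = (∑ s ∈ Finset.range i, k (p s) (p (s + 1)))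
          + (∑ s ∈ Finset.Ico i j, k (p s) (p (s + 1)))
          + (∑ s ∈ Finset.Ico j L, k (p s) (p (s + 1))) := by
      unfold wcost
      rw [Finset.range_eq_Ico, ← Finset.sum_Ico_consecutive _ (Nat.zero_le j) hjL,
        ← Finset.sum_Ico_consecutive _ (Nat.zero_le i) (le_of_lt hij),
        ← Finset.range_eq_Ico]
    have hsplit2 : wcost k r (L - d)
        = (∑ s ∈ Finset.range i, k (r s) (r (s + 1)))
          + (∑ s ∈ Finset.Ico i (L - d), k (r s) (r (s + 1))) := by
      unfold wcost
      rw [Finset.range_eq_Ico, ← Finset.sum_Ico_consecutive _ (Nat.zero_le i) (by omega),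
        ← Finset.range_eq_Ico]
    have hc1 : (∑ s ∈ Finset.range i, k (r s) (r (s + 1)))
        = ∑ s ∈ Finset.range i, k (p s) (p (s + 1)) := by
      refine Finset.sum_congr rfl fun s hs => ?_
      have hs' := Finset.mem_range.mp hs
      rw [hrval2 s hs', hstep s hs']
    have hc2 : (∑ s ∈ Finset.Ico i (L - d), k (r s) (r (s + 1)))
        = ∑ s ∈ Finset.Ico j L, k (p s) (p (s + 1)) := by
      rw [Finset.sum_Ico_eq_sum_range, Finset.sum_Ico_eq_sum_range]
      have hLd : L - d - i = L - j := by omega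
      rw [hLd]
      refine Finset.sum_congr rfl fun s hs => ?_
      rw [hrval (i + s) (by omega), hrval (i + s + 1) (by omega)]
      have e1 : i + s + d = j + s := by omega
      have e2 : i + s + 1 + d = j + s + 1 := by omega
      rw [e1, e2]
    have hc3 : wcost k (fun s => p (i + s)) d
        = ∑ s ∈ Finset.Ico i j, k (p s) (p (s + 1)) := by
      unfold wcost
      rw [Finset.sum_Ico_eq_sum_range]
      have : j - i = d := rfl
      rw [this]
      refine Finset.sum_congr rfl fun s hs => ?_
      have e2 : i + (s + 1) = i + s + 1 := by omega
      show k (p (i + s)) (p (i + (s + 1))) = k (p (i + s)) (p (i + s + 1))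
      rw [e2]
    rw [hsplit2, hc1, hc2, hc3, hsplit1]
    ring

/-- From nonnegativity of simple closed walks to all closed walks. -/
lemma no_neg_closed (R : W → W → Prop) (k : W → W → ℤ)
    (hno : ∀ (p : ℕ → W) (L : ℕ), 0 < L → IsWalk R p L → p L = p 0 →
      (∀ a b, a < L → b < L → p a = p b → a = b) → 0 ≤ wcost k p L) :
    ∀ (p : ℕ → W) (L : ℕ), 0 < L → IsWalk R p L → p L = p 0 → 0 ≤ wcost k p L := by
  intro p L
  induction L using Nat.strong_induction_on generalizing p with
  | _ L ih =>
    intro hL hw hclosed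
    by_cases hinj : ∀ a b, a < L → b < L → p a = p b → a = b
    · exact hno p L hL hw hclosed hinj
    · push_neg at hinj
      obtain ⟨a, b, ha, hb, hab, hne⟩ := hinj
      -- wlog a < b
      have hmain : ∀ a b, a < b → b < L → p a = p b → 0 ≤ wcost k p L := by
        intro a b hab' hb' heq
        set d := b - a with hd
        obtain ⟨hw', hend, hstart, hcost⟩ :=
          splice R k p L a b hab' (le_of_lt hb') hw heq
        rw [← hd] at hw' hend hstart hcost
        have hcyc : 0 ≤ wcost k (fun s => p (a + s)) d := by
          refine ih d (by omega) _ (by omega) ?_ ?_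
          · intro s hs
            have := hw (a + s) (by omega)
            have e : a + (s + 1) = a + s + 1 := by omega
            show R (p (a + s)) (p (a + (s + 1)))
            rw [e]
            exact this
          · show p (a + d) = p (a + 0)
            have e1 : a + d = b := by omega
            rw [e1, add_zero, heq]
        have hrest : 0 ≤ wcost k (fun s => if s < a then p s else p (s + d)) (L - d) := by
          refine ih (L - d) (by omega) _ (by omega) hw' ?_
          have hend' : (if L - d < a then p (L - d) else p (L - d + d)) = p L := hend
          have hstart' : (if 0 < a then p 0 else p (0 + d)) = p 0 := hstart
          rw [hend', hstart', hclosed]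
        omega
      rcases lt_or_gt_of_ne hne with h | h
      · exact hmain a b h hb hab
      · exact hmain b a h ha hab.symm

variable [Fintype W] [Nonempty W]

/-- Bellman–Ford table. -/
noncomputable def BF (R : W → W → Prop) (k : W → W → ℤ) : ℕ → W → ℤ
  | 0 => fun _ => 0
  | (l + 1) => fun u =>
      Finset.univ.inf' Finset.univ_nonempty
        (fun t => if R t u then min (BF R k l u) (BF R k l t + k t u) else BF R k l u)

variable (R : W → W → Prop) (k : W → W → ℤ)

lemma BF_succ_le (l : ℕ) (u : W) : BF R k (l + 1) u ≤ BF R k l u := by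
  refine le_trans (Finset.inf'_le _ (Finset.mem_univ (Classical.arbitrary W))) ?_
  split
  · exact min_le_left _ _
  · exact le_rfl

lemma BF_mono {l l' : ℕ} (h : l ≤ l') (u : W) : BF R k l' u ≤ BF R k l u := by
  induction l' with
  | zero => have : l = 0 := by omega
            rw [this]
  | succ m ihm =>
    rcases Nat.lt_or_ge l (m + 1) with h' | h'
    · exact le_trans (BF_succ_le R k m u) (ihm (by omega))
    · have : l = m + 1 := by omega
      rw [this]

lemma BF_le_step {t u : W} (l : ℕ) (h : R t u) :
    BF R k (l + 1) u ≤ BF R k l t + k t u := by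
  refine le_trans (Finset.inf'_le _ (Finset.mem_univ t)) ?_
  rw [if_pos h]
  exact min_le_right _ _

lemma BF_cases (l : ℕ) (u : W) :
    BF R k (l + 1) u = BF R k l u ∨
    ∃ t, R t u ∧ BF R k (l + 1) u = BF R k l t + k t u := by
  obtain ⟨t, -, ht⟩ := Finset.exists_mem_eq_inf' (Finset.univ_nonempty)
    (fun t => if R t u then min (BF R k l u) (BF R k l t + k t u) else BF R k l u)
  rw [show BF R k (l+1) u = _ from ht]
  split
  · rcases min_cases (BF R k l u) (BF R k l t + k t u) with ⟨h1, -⟩ | ⟨h1, -⟩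
    · left; exact h1
    · right; exact ⟨t, by assumption, h1⟩
  · left; rfl

lemma BF_le_walk (p : ℕ → W) (L : ℕ) (hw : IsWalk R p L) :
    BF R k L (p L) ≤ wcost k p L := by
  induction L with
  | zero => simp [BF, wcost]
  | succ m ihm =>
    have h1 : BF R k (m + 1) (p (m + 1)) ≤ BF R k m (p m) + k (p m) (p (m + 1)) :=
      BF_le_step R k m (hw m (by omega))
    have h2 := ihm (fun i hi => hw i (by omega))
    unfold wcost
    rw [Finset.sum_range_succ]
    exact le_trans h1 (by unfold wcost at h2; omega)

lemma BF_achieved (l : ℕ) (u : W) :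
    ∃ (p : ℕ → W) (L : ℕ), L ≤ l ∧ IsWalk R p L ∧ p L = u ∧ wcost k p L = BF R k l u := by
  induction l generalizing u with
  | zero =>
    exact ⟨fun _ => u, 0, le_rfl, fun i hi => absurd hi (by omega), rfl, by simp [wcost, BF]⟩
  | succ m ihm =>
    rcases BF_cases R k m u with h | ⟨t, hR, h⟩
    · obtain ⟨p, L, hL, hw, hend, hcost⟩ := ihm u
      exact ⟨p, L, by omega, hw, hend, by rw [hcost, h]⟩
    · obtain ⟨p, L, hL, hw, hend, hcost⟩ := ihm t
      refine ⟨fun s => if s ≤ L then p s else u, L + 1, by omega, ?_, ?_, ?_⟩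
      · intro i hi
        rcases Nat.lt_or_ge i L with h' | h'
        · simp only [if_pos (by omega : i ≤ L), if_pos (by omega : i + 1 ≤ L)]
          exact hw i h'
        · have hiL : i = L := by omega
          subst hiL
          simp only [if_pos le_rfl, if_neg (by omega : ¬ i + 1 ≤ i)]
          rw [hend]
          exact hR
      · simp
      · unfold wcost
        rw [Finset.sum_range_succ]
        simp only [if_pos le_rfl, if_neg (by omega : ¬ L + 1 ≤ L)]
        have : (∑ i ∈ Finset.range L, k (if i ≤ L then p i else u) (if i + 1 ≤ L then p (i + 1) else u)) = wcost k p L := by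
          refine Finset.sum_congr rfl fun s hs => ?_
          have hs' := Finset.mem_range.mp hs
          simp only [if_pos (by omega : s ≤ L), if_pos (by omega : s + 1 ≤ L)]
        rw [this, hcost, hend, h]

/-- Existence of feasible potentials in a digraph without negative
(simple closed) cycles. -/
theorem exists_potential
    (hno : ∀ (p : ℕ → W) (L : ℕ), 0 < L → IsWalk R p L → p L = p 0 →
      (∀ a b, a < L → b < L → p a = p b → a = b) → 0 ≤ wcost k p L) :
    ∃ π : W → ℤ, ∀ a b, R a b → π b ≤ π a + k a b := by
  have hclosed := no_neg_closed R k hno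
  set N := Fintype.card W with hN
  -- master lemma
  have master : ∀ (L : ℕ) (p : ℕ → W), IsWalk R p L → BF R k N (p L) ≤ wcost k p L := by
    intro L
    induction L using Nat.strong_induction_on with
    | _ L ih =>
      intro p hw
      rcases Nat.lt_or_ge N L with hNL | hNL
      · -- pigeonhole
        obtain ⟨a, b, hab, heq⟩ := Fintype.exists_ne_map_eq_of_card_lt
          (fun i : Fin (N + 1) => p i) (by simp [hN])
        have hmain : ∀ a b : ℕ, a < b → b ≤ N → p a = p b → BF R k N (p L) ≤ wcost k p L := by
          intro a b hab' hbN heq'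
          obtain ⟨hw', hend, hstart, hcost⟩ :=
            splice R k p L a b hab' (by omega) hw heq'
          have hcyc : 0 ≤ wcost k (fun s => p (a + s)) (b - a) := by
            refine hclosed _ (b - a) (by omega) ?_ ?_
            · intro s hs
              have := hw (a + s) (by omega)
              have e : a + (s + 1) = a + s + 1 := by omega
              show R (p (a + s)) (p (a + (s + 1)))
              rw [e]; exact this
            · show p (a + (b - a)) = p (a + 0)
              have e1 : a + (b - a) = b := by omega
              rw [e1, add_zero, heq']
          have hrec := ih (L - (b - a)) (by omega) _ hw'
          have hend2 : (if L - (b - a) < a then p (L - (b - a))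
              else p (L - (b - a) + (b - a))) = p L := hend
          rw [hend2] at hrec
          omega
        rcases lt_or_gt_of_ne (fun h : (a : ℕ) = (b : ℕ) => hab (Fin.ext h)) with h | h
        · exact hmain a b h (by omega) heq
        · exact hmain b a h (by omega) heq.symm
      · exact le_trans (BF_mono R k hNL (p L)) (BF_le_walk R k p L hw)
  refine ⟨BF R k N, fun a b hR => ?_⟩
  obtain ⟨p, L, hL, hw, hend, hcost⟩ := BF_achieved R k N a
  -- extend the optimal walk to `a` by the arc `(a, b)`
  have hw' : IsWalk R (fun s => if s ≤ L then p s else b) (L + 1) := by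
    intro i hi
    rcases Nat.lt_or_ge i L with h' | h'
    · simp only [if_pos (by omega : i ≤ L), if_pos (by omega : i + 1 ≤ L)]
      exact hw i h'
    · have hiL : i = L := by omega
      subst hiL
      simp only [if_pos le_rfl, if_neg (by omega : ¬ i + 1 ≤ i)]
      rw [hend]; exact hR
  have := master (L + 1) _ hw'
  have hend' : (if L + 1 ≤ L then p (L + 1) else b) = b := if_neg (by omega)
  rw [hend'] at this
  refine le_trans this ?_
  unfold wcost
  rw [Finset.sum_range_succ]
  simp only [if_pos le_rfl, if_neg (by omega : ¬ L + 1 ≤ L)]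
  have : (∑ i ∈ Finset.range L, k (if i ≤ L then p i else b) (if i + 1 ≤ L then p (i + 1) else b)) = wcost k p L := by
    refine Finset.sum_congr rfl fun s hs => ?_
    have hs' := Finset.mem_range.mp hs
    simp only [if_pos (by omega : s ≤ L), if_pos (by omega : s + 1 ≤ L)]
  rw [this, hcost, hend]

end Potential

section Residual
open Classical Finset

/-- The residual digraph on `V × Bool` ((v,false) = "in-copy", (v,true) = "out-copy"). -/
def Res (A : Set (V × V)) (w t : V → ℕ) (x : V × V → ℕ) :
    (V × Bool) → (V × Bool) → Prop := fun a b =>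
  (a.2 = true ∧ b.2 = false ∧ a.1 ≠ b.1 ∧ (a.1, b.1) ∈ A) ∨
  (a.2 = false ∧ b.2 = true ∧ a.1 ≠ b.1 ∧ 0 < x (b.1, a.1)) ∨
  (a.2 = false ∧ b.2 = true ∧ a.1 = b.1) ∨
  (a.2 = true ∧ b.2 = false ∧ a.1 = b.1 ∧ w a.1 < t a.1)

/-- Residual costs. -/
def kres (c : V × V → ℕ) : (V × Bool) → (V × Bool) → ℤ := fun a b =>
  if a.1 = b.1 then 0 else if a.2 = true then (c (a.1, b.1) : ℤ) else -(c (b.1, a.1) : ℤ)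

lemma Res.flip {A : Set (V × V)} {w t : V → ℕ} {x : V × V → ℕ} {a b : V × Bool}
    (h : Res A w t x a b) : a.2 = !b.2 := by
  rcases h with ⟨h1, h2, -⟩ | ⟨h1, h2, -⟩ | ⟨h1, h2, -⟩ | ⟨h1, h2, -⟩ <;> rw [h1, h2] <;> rfl

variable [Fintype V]

/-- Augmentation: in the residual digraph of a minimum-cost covering, every
simple closed walk has nonnegative cost. -/
lemma no_neg_cycle (A : Set (V × V)) (c : V × V → ℕ) (w : V → ℕ) (y₀ : DiCircuit A →₀ ℕ)
    (hcov : ∀ v, w v ≤ cov y₀ v)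
    (hmin : ∀ y' : DiCircuit A →₀ ℕ, (∀ v, w v ≤ cov y' v) → ycost c y₀ ≤ ycost c y')
    (p : ℕ → V × Bool) (L : ℕ) (hL : 0 < L)
    (hwk : IsWalk (Res A w (cov y₀) (eflow y₀)) p L) (hclosed : p L = p 0)
    (hinj : ∀ a b, a < L → b < L → p a = p b → a = b) :
    0 ≤ wcost (kres c) p L := by
  by_contra hneg
  push_neg at hneg
  set x : V × V → ℕ := eflow y₀ with hxdef
  set t : V → ℕ := cov y₀ with htdef
  set R := Res A w t x with hRdef
  -- arc-use counts
  set cnt : (V × Bool) → (V × Bool) → ℕ := fun a b =>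
    ((Finset.range L).filter (fun i => p i = a ∧ p (i + 1) = b)).card with hcnt
  have hcnt_le_one : ∀ a b, cnt a b ≤ 1 := by
    intro a b
    refine Finset.card_le_one.mpr fun i hi j hj => ?_
    simp only [Finset.mem_filter, Finset.mem_range] at hi hj
    exact hinj i j hi.1 hj.1 (hi.2.1.trans hj.2.1.symm)
  have hcnt_res : ∀ a b, 0 < cnt a b → R a b := by
    intro a b h
    obtain ⟨i, hi⟩ := Finset.card_pos.mp h
    simp only [Finset.mem_filter, Finset.mem_range] at hi
    have := hwk i hi.1
    rw [hi.2.1, hi.2.2] at this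
    exact this
  -- per-node balance of the closed walk
  have hbal : ∀ a : V × Bool,
      ((Finset.range L).filter (fun i => p (i + 1) = a)).card
        = ((Finset.range L).filter (fun i => p i = a)).card := by
    intro a
    refine Finset.card_bij' (fun i _ => (i + 1) % L) (fun j _ => if j = 0 then L - 1 else j - 1)
      ?_ ?_ ?_ ?_
    · intro i hi
      simp only [Finset.mem_filter, Finset.mem_range] at hi ⊢
      refine ⟨Nat.mod_lt _ hL, ?_⟩
      rcases Nat.lt_or_ge (i + 1) L with h | h
      · rw [Nat.mod_eq_of_lt h]; exact hi.2
      · have : i + 1 = L := by omega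
        rw [this, Nat.mod_self, ← hclosed, ← this]; exact hi.2
    · intro j hj
      simp only [Finset.mem_filter, Finset.mem_range] at hj ⊢
      split
      · refine ⟨by omega, ?_⟩
        have : L - 1 + 1 = L := by omega
        rw [this, hclosed]
        rw [← (by assumption : j = 0)]
        exact hj.2
      · refine ⟨by omega, ?_⟩
        have : j - 1 + 1 = j := by omega
        rw [this]; exact hj.2
    · intro i hi
      simp only [Finset.mem_filter, Finset.mem_range] at hi
      show (if (i + 1) % L = 0 then L - 1 else (i + 1) % L - 1) = i
      rcases Nat.lt_or_ge (i + 1) L with h | h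
      · rw [Nat.mod_eq_of_lt h, if_neg (by omega)]
        omega
      · have hiL : i + 1 = L := by omega
        rw [hiL, Nat.mod_self, if_pos rfl]
        omega
    · intro j hj
      simp only [Finset.mem_filter, Finset.mem_range] at hj
      show ((if j = 0 then L - 1 else j - 1) + 1) % L = j
      split
      · have h1 : L - 1 + 1 = L := by omega
        rw [h1, Nat.mod_self]
        omega
      · have h1 : j - 1 + 1 = j := by omega
        rw [h1, Nat.mod_eq_of_lt hj.1]

  -- fiberwise splits of the in/out counts
  have hin_split : ∀ a : V × Bool,
      ((Finset.range L).filter (fun i => p (i + 1) = a)).card = ∑ b : V × Bool, cnt b a := by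
    intro a
    rw [Finset.card_eq_sum_card_fiberwise (f := fun i => p i) (t := Finset.univ)
      (fun i _ => Finset.mem_univ _)]
    refine Finset.sum_congr rfl fun b _ => ?_
    simp only [hcnt]
    congr 1
    rw [Finset.filter_filter]
    exact Finset.filter_congr fun i _ => by rw [and_comm]
  have hout_split : ∀ a : V × Bool,
      ((Finset.range L).filter (fun i => p i = a)).card = ∑ b : V × Bool, cnt a b := by
    intro a
    rw [Finset.card_eq_sum_card_fiberwise (f := fun i => p (i + 1)) (t := Finset.univ)
      (fun i _ => Finset.mem_univ _)]
    refine Finset.sum_congr rfl fun b _ => ?_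
    simp only [hcnt]
    congr 1
    rw [Finset.filter_filter]
  have hbalsum : ∀ a : V × Bool, (∑ b : V × Bool, cnt b a) = ∑ b : V × Bool, cnt a b := by
    intro a
    rw [← hin_split, ← hout_split, hbal]
  -- counts classified
  set F : V × V → ℕ := fun e => if e.1 = e.2 then 0 else cnt (e.1, true) (e.2, false) with hF
  set B : V × V → ℕ := fun e => if e.1 = e.2 then 0 else cnt (e.2, false) (e.1, true) with hB
  set Tp : V → ℕ := fun v => cnt (v, false) (v, true) with hTp
  set Tm : V → ℕ := fun v => cnt (v, true) (v, false) with hTm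
  have hsame : ∀ (u v : V) (s : Bool), cnt (u, s) (v, s) = 0 := by
    intro u v s
    by_contra h
    have hres := hcnt_res _ _ (Nat.pos_of_ne_zero h)
    rw [hRdef] at hres
    have := Res.flip hres
    simp at this
  -- generic expansion of sums over `V × Bool`
  have hexp : ∀ {M : Type} [AddCommMonoid M] (g : (V × Bool) → M),
      (∑ b : V × Bool, g b) = (∑ u : V, g (u, true)) + ∑ u : V, g (u, false) := by
    intro M _ g
    rw [Fintype.sum_prod_type]
    simp only [Fintype.sum_bool]
    rw [Finset.sum_add_distrib]
  have hFrow : ∀ v : V, (∑ u : V, cnt (u, true) (v, false)) = (∑ u : V, F (u, v)) + Tm v := by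
    intro v
    have key : ∀ u : V, cnt (u, true) (v, false) = F (u, v) + (if u = v then Tm v else 0) := by
      intro u
      by_cases h : u = v
      · subst h; simp [hF, hTm]
      · simp [hF, h]
    simp only [key]
    rw [Finset.sum_add_distrib, Finset.sum_ite_eq' Finset.univ v (fun _ => Tm v)]
    simp
  have hBrow : ∀ v : V, (∑ u : V, cnt (v, false) (u, true)) = (∑ u : V, B (u, v)) + Tp v := by
    intro v
    have key : ∀ u : V, cnt (v, false) (u, true) = B (u, v) + (if u = v then Tp v else 0) := by
      intro u
      by_cases h : u = v
      · subst h; simp [hB, hTp]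
      · simp [hB, Ne.symm h, h]
    simp only [key]
    rw [Finset.sum_add_distrib, Finset.sum_ite_eq' Finset.univ v (fun _ => Tp v)]
    simp
  have hBcol : ∀ v : V, (∑ u : V, cnt (u, false) (v, true)) = (∑ u : V, B (v, u)) + Tp v := by
    intro v
    have key : ∀ u : V, cnt (u, false) (v, true) = B (v, u) + (if u = v then Tp v else 0) := by
      intro u
      by_cases h : u = v
      · subst h; simp [hB, hTp]
      · simp [hB, Ne.symm h, h]
    simp only [key]
    rw [Finset.sum_add_distrib, Finset.sum_ite_eq' Finset.univ v (fun _ => Tp v)]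
    simp
  have hFcol : ∀ v : V, (∑ u : V, cnt (v, true) (u, false)) = (∑ u : V, F (v, u)) + Tm v := by
    intro v
    have key : ∀ u : V, cnt (v, true) (u, false) = F (v, u) + (if u = v then Tm v else 0) := by
      intro u
      by_cases h : u = v
      · subst h; simp [hF, hTm]
      · simp [hF, Ne.symm h, h]
    simp only [key]
    rw [Finset.sum_add_distrib, Finset.sum_ite_eq' Finset.univ v (fun _ => Tm v)]
    simp
  -- node balance in terms of F, B, Tp, Tm
  have hinb : ∀ v : V, (∑ u : V, F (u, v)) + Tm v = (∑ u : V, B (u, v)) + Tp v := by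
    intro v
    have h1 := hbalsum (v, false)
    rw [hexp (fun b => cnt b (v, false)), hexp (fun b => cnt (v, false) b)] at h1
    simp only [hsame, Finset.sum_const_zero, add_zero] at h1
    rw [hFrow v, hBrow v] at h1
    exact h1
  have houtb : ∀ v : V, (∑ u : V, B (v, u)) + Tp v = (∑ u : V, F (v, u)) + Tm v := by
    intro v
    have h1 := hbalsum (v, true)
    rw [hexp (fun b => cnt b (v, true)), hexp (fun b => cnt (v, true) b)] at h1
    simp only [hsame, Finset.sum_const_zero, zero_add, add_zero] at h1
    rw [hBcol v, hFcol v] at h1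
    exact h1
  -- the modified flow
  have hBle : ∀ e : V × V, B e ≤ x e := by
    intro e
    by_cases h12 : e.1 = e.2
    · simp [hB, h12]
    · by_cases hb : B e = 0
      · simp [hb]
      · have hbpos : 0 < cnt (e.2, false) (e.1, true) := by
          have : B e = cnt (e.2, false) (e.1, true) := by simp [hB, h12]
          omega
        have hres := hcnt_res _ _ hbpos
        rw [hRdef] at hres
        have hxe : 0 < x e := by
          rcases hres with ⟨h1, -⟩ | ⟨-, -, -, h4⟩ | ⟨-, -, h3⟩ | ⟨h1, -⟩
          · simp at h1
          · exact h4
          · exact absurd h3.symm h12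
          · simp at h1
        have := hcnt_le_one (e.2, false) (e.1, true)
        have : B e ≤ 1 := by simp only [hB, if_neg h12]; omega
        omega
  set x' : V × V → ℕ := fun e => x e + F e - B e with hx'
  have hx'cast : ∀ e, (x' e : ℤ) = (x e : ℤ) + F e - B e := by
    intro e
    simp only [hx']
    have := hBle e
    push_cast [Nat.cast_sub (le_trans (hBle e) (Nat.le_add_right _ _))]
    ring
  have hx'supp : ∀ e, 0 < x' e → e ∈ A ∧ e.1 ≠ e.2 := by
    intro e he
    by_cases hxe : 0 < x e
    · exact eflow_supp hxe
    · have hFe : 0 < F e := by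
        simp only [hx'] at he
        omega
      have he12 : e.1 ≠ e.2 := by
        by_contra h
        simp [hF, h] at hFe
      have hcpos : 0 < cnt (e.1, true) (e.2, false) := by
        simpa [hF, he12] using hFe
      have hres := hcnt_res _ _ hcpos
      rw [hRdef] at hres
      rcases hres with ⟨-, -, -, h4⟩ | ⟨h1, -⟩ | ⟨h1, -⟩ | ⟨-, -, h3, -⟩
      · exact ⟨h4, he12⟩
      · simp at h1
      · simp at h1
      · exact absurd h3 he12
  have hxin : ∀ v : V, (∑ u : V, x (u, v)) = t v := fun v => eflow_in y₀ v
  have hxout : ∀ v : V, (∑ u : V, x (v, u)) = t v := fun v => eflow_out y₀ v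
  have hin' : ∀ v : V, (∑ u : V, (x' (u, v) : ℤ)) = (t v : ℤ) + Tp v - Tm v := by
    intro v
    simp only [hx'cast]
    rw [Finset.sum_sub_distrib, Finset.sum_add_distrib]
    have e1 : (∑ u : V, (x (u, v) : ℤ)) = (t v : ℤ) := by exact_mod_cast hxin v
    have e2 : ((∑ u : V, (F (u, v) : ℤ)) + Tm v) = (∑ u : V, (B (u, v) : ℤ)) + Tp v := by
      exact_mod_cast hinb v
    omega
  have hout' : ∀ v : V, (∑ u : V, (x' (v, u) : ℤ)) = (t v : ℤ) + Tp v - Tm v := by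
    intro v
    simp only [hx'cast]
    rw [Finset.sum_sub_distrib, Finset.sum_add_distrib]
    have e1 : (∑ u : V, (x (v, u) : ℤ)) = (t v : ℤ) := by exact_mod_cast hxout v
    have e2 : ((∑ u : V, (B (v, u) : ℤ)) + Tp v) = (∑ u : V, (F (v, u) : ℤ)) + Tm v := by
      exact_mod_cast houtb v
    omega
  have hcons : ∀ v : V, (∑ u : V, x' (u, v)) = ∑ u : V, x' (v, u) := by
    intro v
    have h := (hin' v).trans (hout' v).symm
    exact_mod_cast h
  obtain ⟨y', hy'⟩ := decompose_circulation (∑ e : V × V, x' e) x' rfl hx'supp hcons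
  -- the new family still covers w
  have hTm_res : ∀ v : V, 0 < Tm v → w v < t v := by
    intro v hv
    have hres := hcnt_res _ _ hv
    rw [hRdef] at hres
    rcases hres with ⟨-, -, h3, -⟩ | ⟨h1, -⟩ | ⟨h1, -⟩ | ⟨-, -, -, h4⟩
    · exact absurd rfl h3
    · simp at h1
    · simp at h1
    · exact h4
  have hcovy' : ∀ v : V, w v ≤ cov y' v := by
    intro v
    have h1 : ((cov y' v : ℕ) : ℤ) = (t v : ℤ) + Tp v - Tm v := by
      rw [← eflow_in y' v]
      rw [← hin' v]
      push_cast
      refine Finset.sum_congr rfl fun u _ => ?_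
      rw [hy' (u, v)]
    have hTm1 : Tm v ≤ 1 := hcnt_le_one _ _
    have hwt := hcov v
    by_cases hTm0 : Tm v = 0
    · have : (w v : ℤ) ≤ (cov y' v : ℤ) := by rw [h1]; omega
      exact_mod_cast this
    · have hwlt := hTm_res v (Nat.pos_of_ne_zero hTm0)
      have : (w v : ℤ) ≤ (cov y' v : ℤ) := by
        rw [h1]
        have : (w v : ℤ) < t v := by exact_mod_cast hwlt
        omega
      exact_mod_cast this
  -- cost computation
  have hcnt_cast : ∀ a b : V × Bool, ((cnt a b : ℕ) : ℤ)
      = ∑ i ∈ Finset.range L, (if p i = a ∧ p (i + 1) = b then (1 : ℤ) else 0) := by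
    intro a b
    simp only [hcnt]
    rw [Finset.card_filter]
    push_cast
    rfl
  have hc4 : wcost (kres c) p L
      = ∑ a : V × Bool, ∑ b : V × Bool, (cnt a b : ℤ) * kres c a b := by
    have step1 : (∑ a : V × Bool, ∑ b : V × Bool, (cnt a b : ℤ) * kres c a b)
        = ∑ a : V × Bool, ∑ b : V × Bool, ∑ i ∈ Finset.range L,
            (if p i = a ∧ p (i + 1) = b then (1 : ℤ) else 0) * kres c a b := by
      refine Finset.sum_congr rfl fun a _ => Finset.sum_congr rfl fun b _ => ?_
      rw [hcnt_cast, Finset.sum_mul]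
    rw [step1]
    have step2 : ∀ a : V × Bool, (∑ b : V × Bool, ∑ i ∈ Finset.range L,
            (if p i = a ∧ p (i + 1) = b then (1 : ℤ) else 0) * kres c a b)
        = ∑ i ∈ Finset.range L, ∑ b : V × Bool,
            (if p i = a ∧ p (i + 1) = b then (1 : ℤ) else 0) * kres c a b :=
      fun a => Finset.sum_comm
    simp only [step2]
    rw [Finset.sum_comm]
    unfold wcost
    refine Finset.sum_congr rfl fun i _ => ?_
    have inner : ∀ a : V × Bool, (∑ b : V × Bool,
        (if p i = a ∧ p (i + 1) = b then (1 : ℤ) else 0) * kres c a b)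
        = if p i = a then kres c a (p (i + 1)) else 0 := by
      intro a
      by_cases h : p i = a
      · simp only [h, true_and, ite_mul, one_mul, zero_mul]
        rw [Finset.sum_ite_eq]
        simp
      · simp [h]
    rw [Finset.sum_congr rfl fun a _ => inner a, Finset.sum_ite_eq]
    simp
  have hc5 : (∑ a : V × Bool, ∑ b : V × Bool, (cnt a b : ℤ) * kres c a b)
      = (∑ e : V × V, (c e : ℤ) * F e) - ∑ e : V × V, (c e : ℤ) * B e := by
    rw [hexp (fun a => ∑ b : V × Bool, (cnt a b : ℤ) * kres c a b)]
    have e1 : ∀ u : V, (∑ b : V × Bool, (cnt (u, true) b : ℤ) * kres c (u, true) b)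
        = ∑ v : V, (cnt (u, true) (v, false) : ℤ) * kres c (u, true) (v, false) := by
      intro u
      rw [hexp (fun b => (cnt (u, true) b : ℤ) * kres c (u, true) b)]
      simp [hsame]
    have e2 : ∀ u : V, (∑ b : V × Bool, (cnt (u, false) b : ℤ) * kres c (u, false) b)
        = ∑ v : V, (cnt (u, false) (v, true) : ℤ) * kres c (u, false) (v, true) := by
      intro u
      rw [hexp (fun b => (cnt (u, false) b : ℤ) * kres c (u, false) b)]
      simp [hsame]
    simp only [e1, e2]
    have t1 : ∀ u v : V, (cnt (u, true) (v, false) : ℤ) * kres c (u, true) (v, false)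
        = (c (u, v) : ℤ) * F (u, v) := by
      intro u v
      by_cases h : u = v
      · simp [kres, hF, h]
      · simp only [kres, hF, if_neg h]
        rw [mul_comm]
        rfl
    have t2 : ∀ u v : V, (cnt (u, false) (v, true) : ℤ) * kres c (u, false) (v, true)
        = -((c (v, u) : ℤ) * B (v, u)) := by
      intro u v
      by_cases h : u = v
      · simp [kres, hB, h]
      · simp only [kres, hB, if_neg h, if_neg (Ne.symm h)]
        simp only [Bool.false_eq_true, if_false]
        push_cast
        ring_nf
    simp only [t1, t2]
    have swap_eq : (∑ u : V, ∑ v : V, -((c (v, u) : ℤ) * B (v, u)))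
        = ∑ v : V, ∑ u : V, -((c (v, u) : ℤ) * B (v, u)) := Finset.sum_comm
    rw [swap_eq]
    rw [Fintype.sum_prod_type (f := fun e : V × V => (c e : ℤ) * F e)]
    rw [Fintype.sum_prod_type (f := fun e : V × V => (c e : ℤ) * B e)]
    rw [sub_eq_add_neg, ← Finset.sum_neg_distrib]
    congr 1
    refine Finset.sum_congr rfl fun v _ => ?_
    rw [Finset.sum_neg_distrib]
  -- total cost of the new family
  have hycost' : (ycost c y' : ℤ) = (ycost c y₀ : ℤ) + wcost (kres c) p L := by
    rw [ycost_eq_flow c y', ycost_eq_flow c y₀, hc4, hc5]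
    push_cast
    have key : ∀ e : V × V, (c e : ℤ) * (eflow y' e : ℤ)
        = (c e : ℤ) * (x e : ℤ) + ((c e : ℤ) * F e - (c e : ℤ) * B e) := by
      intro e
      rw [hy' e, hx'cast e]
      ring
    simp only [key]
    rw [Finset.sum_add_distrib, Finset.sum_sub_distrib]
  have hfinal := hmin y' hcovy'
  have : (ycost c y₀ : ℤ) ≤ (ycost c y' : ℤ) := by exact_mod_cast hfinal
  omega

end Residual

section Final
open Classical Finset

variable [Fintype V]

lemma exists_good_z [Nonempty V] (A : Set (V × V)) (c : V × V → ℕ) (w : V → ℕ)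
    (y₀ : DiCircuit A →₀ ℕ) (hcov : ∀ v, w v ≤ cov y₀ v)
    (hmin : ∀ y' : DiCircuit A →₀ ℕ, (∀ v, w v ≤ cov y' v) → ycost c y₀ ≤ ycost c y') :
    ∃ z : V → ℕ, (∀ K : DiCircuit A, K.vsum z ≤ K.cost c) ∧
      (∑ v : V, w v * z v) = ycost c y₀ := by
  obtain ⟨π, hπ⟩ := exists_potential (Res A w (cov y₀) (eflow y₀)) (kres c)
    (no_neg_cycle A c w y₀ hcov hmin)
  set x : V × V → ℕ := eflow y₀ with hxdef
  set t : V → ℕ := cov y₀ with htdef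
  set z : V → ℕ := fun v => (π (v, false) - π (v, true)).toNat with hz
  have hzv : ∀ v : V, (z v : ℤ) = π (v, false) - π (v, true) := by
    intro v
    have hres : Res A w t x (v, false) (v, true) := Or.inr (Or.inr (Or.inl ⟨rfl, rfl, rfl⟩))
    have h := hπ _ _ hres
    have hk : kres c (v, false) (v, true) = 0 := by simp [kres]
    rw [hk, add_zero] at h
    simp only [hz]
    rw [Int.toNat_of_nonneg (by omega)]
  have hzslack : ∀ v : V, w v < t v → z v = 0 := by
    intro v hv
    have hres : Res A w t x (v, true) (v, false) := Or.inr (Or.inr (Or.inr ⟨rfl, rfl, rfl, hv⟩))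
    have h := hπ _ _ hres
    have hk : kres c (v, true) (v, false) = 0 := by simp [kres]
    rw [hk, add_zero] at h
    simp only [hz]
    omega
  have hxtight : ∀ e : V × V, 0 < x e → (c e : ℤ) = π (e.2, false) - π (e.1, true) := by
    intro e he
    obtain ⟨heA, he12⟩ := eflow_supp he
    have hres1 : Res A w t x (e.1, true) (e.2, false) := Or.inl ⟨rfl, rfl, he12, by simpa⟩
    have hres2 : Res A w t x (e.2, false) (e.1, true) :=
      Or.inr (Or.inl ⟨rfl, rfl, Ne.symm he12, by simpa⟩)
    have h1 := hπ _ _ hres1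
    have h2 := hπ _ _ hres2
    have hk1 : kres c (e.1, true) (e.2, false) = (c e : ℤ) := by
      simp [kres, he12]
    have hk2 : kres c (e.2, false) (e.1, true) = -(c e : ℤ) := by
      simp [kres, Ne.symm he12]
    rw [hk1] at h1
    rw [hk2] at h2
    omega
  have hindep : ∀ K : DiCircuit A, K.vsum z ≤ K.cost c := by
    intro K
    have harc : ∀ i : ZMod K.n,
        π (K.f (i + 1), false) ≤ π (K.f i, true) + (c (K.f i, K.f (i + 1)) : ℤ) := by
      intro i
      have hres : Res A w t x (K.f i, true) (K.f (i + 1), false) :=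
        Or.inl ⟨rfl, rfl, K.loopless i, K.mem i⟩
      have h := hπ _ _ hres
      have hk : kres c (K.f i, true) (K.f (i + 1), false) = (c (K.f i, K.f (i + 1)) : ℤ) := by
        simp [kres, K.loopless i]
      rwa [hk] at h
    have hsum := Finset.sum_le_sum (fun i (_ : i ∈ (Finset.univ : Finset (ZMod K.n))) => harc i)
    rw [Finset.sum_add_distrib] at hsum
    have hshift : (∑ i : ZMod K.n, π (K.f (i + 1), false)) = ∑ i : ZMod K.n, π (K.f i, false) :=
      Fintype.sum_equiv (Equiv.addRight (1 : ZMod K.n))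
        (fun i => π (K.f (i + 1), false)) (fun i => π (K.f i, false)) (fun i => rfl)
  -- g (e i) = π (f (i+1), false) = f i ✓
    rw [hshift] at hsum
    have hcast : (K.vsum z : ℤ) ≤ (K.cost c : ℤ) := by
      rw [K.vsum_eq z, K.cost_eq c]
      push_cast
      calc (∑ i : ZMod K.n, (z (K.f i) : ℤ))
          = ∑ i : ZMod K.n, (π (K.f i, false) - π (K.f i, true)) := by
            exact Finset.sum_congr rfl fun i _ => hzv (K.f i)
        _ = (∑ i : ZMod K.n, π (K.f i, false)) - ∑ i : ZMod K.n, π (K.f i, true) :=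
            Finset.sum_sub_distrib _ _
        _ ≤ ∑ i : ZMod K.n, (c (K.f i, K.f (i + 1)) : ℤ) := by omega
    exact_mod_cast hcast
  refine ⟨z, hindep, ?_⟩
  have hval : (∑ v : V, (w v : ℤ) * z v) = (ycost c y₀ : ℤ) := by
    have e0 : (ycost c y₀ : ℤ) = ∑ e : V × V, (c e : ℤ) * x e := by
      rw [ycost_eq_flow c y₀]
      push_cast
      rfl
    have e1 : (∑ e : V × V, (c e : ℤ) * x e)
        = ∑ e : V × V, (x e : ℤ) * (π (e.2, false) - π (e.1, true)) := by
      refine Finset.sum_congr rfl fun e _ => ?_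
      by_cases h : 0 < x e
      · rw [← hxtight e h]; ring
      · have : x e = 0 := by omega
        rw [this]; simp
    have e2 : (∑ e : V × V, (x e : ℤ) * (π (e.2, false) - π (e.1, true)))
        = (∑ u : V, ∑ v : V, (x (u, v) : ℤ) * π (v, false))
          - ∑ u : V, ∑ v : V, (x (u, v) : ℤ) * π (u, true) := by
      rw [Fintype.sum_prod_type
        (f := fun e : V × V => (x e : ℤ) * (π (e.2, false) - π (e.1, true)))]
      rw [← Finset.sum_sub_distrib]
      refine Finset.sum_congr rfl fun u _ => ?_
      rw [← Finset.sum_sub_distrib]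
      refine Finset.sum_congr rfl fun v _ => ?_
      ring
    have e3 : (∑ u : V, ∑ v : V, (x (u, v) : ℤ) * π (v, false))
        = ∑ v : V, (t v : ℤ) * π (v, false) := by
      rw [Finset.sum_comm]
      refine Finset.sum_congr rfl fun v _ => ?_
      rw [← Finset.sum_mul]
      congr 1
      exact_mod_cast eflow_in y₀ v
    have e4 : (∑ u : V, ∑ v : V, (x (u, v) : ℤ) * π (u, true))
        = ∑ u : V, (t u : ℤ) * π (u, true) := by
      refine Finset.sum_congr rfl fun u _ => ?_
      rw [← Finset.sum_mul]
      congr 1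
      exact_mod_cast eflow_out y₀ u
    have e5 : (∑ v : V, (t v : ℤ) * π (v, false)) - (∑ v : V, (t v : ℤ) * π (v, true))
        = ∑ v : V, (t v : ℤ) * z v := by
      rw [← Finset.sum_sub_distrib]
      refine Finset.sum_congr rfl fun v _ => ?_
      rw [hzv v]
      ring
    have e6 : (∑ v : V, (t v : ℤ) * z v) = ∑ v : V, (w v : ℤ) * z v := by
      refine Finset.sum_congr rfl fun v _ => ?_
      by_cases h : z v = 0
      · rw [h]; simp
      · have : ¬ (w v < t v) := fun hlt => h (hzslack v hlt)
        have : t v = w v := by have := hcov v; omega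
        rw [this]
    rw [e0, e1, e2, e3, e4, e5, e6]
  exact_mod_cast hval

lemma cov_add (A : Set (V × V)) (y₁ y₂ : DiCircuit A →₀ ℕ) (u : V) :
    cov (y₁ + y₂) u = cov y₁ u + cov y₂ u := by
  unfold cov
  refine Finsupp.sum_add_index' (fun K => ?_) (fun K a b => ?_)
  · simp
  · simp only [Set.indicator_apply]
    split <;> simp

lemma cov_zero (A : Set (V × V)) (u : V) : cov (0 : DiCircuit A →₀ ℕ) u = 0 := by
  simp [cov]

lemma cov_single (A : Set (V × V)) (K : DiCircuit A) (a : ℕ) (u : V) :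
    cov (Finsupp.single K a) u = if u ∈ K.verts then a else 0 := by
  unfold cov
  rw [Finsupp.sum_single_index (by simp)]
  rw [Set.indicator_apply]

lemma cov_finset_sum (A : Set (V × V)) {ι : Type*} (s : Finset ι)
    (g : ι → (DiCircuit A →₀ ℕ)) (u : V) :
    cov (∑ i ∈ s, g i) u = ∑ i ∈ s, cov (g i) u := by
  induction s using Finset.cons_induction with
  | empty => simp [cov_zero]
  | cons i s hi ih =>
    rw [Finset.sum_cons, Finset.sum_cons, cov_add, ih]

end Final

/-- Gallai: min over integral coverings `y` of `w` by
di-circuits of `Σ y(K)·c̃(K)` equals max over `c`-independent integral vectors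
`z` of `Σ w(v)·z(v)`. -/
theorem stmt14 [Fintype V] (A : Set (V × V)) (c : V × V → ℕ) (w : V → ℕ)
    (hw : ∀ v : V, 0 < w v → ∃ K : DiCircuit A, v ∈ K.verts) :
    ∃ m : ℕ,
      IsLeast {t | ∃ y : DiCircuit A →₀ ℕ,
          (∀ v, w v ≤ y.sum fun K a => K.verts.indicator (fun _ => a) v) ∧
          t = y.sum fun K a => a * K.cost c} m ∧
      IsGreatest {t | ∃ z : V → ℕ,
          (∀ K : DiCircuit A, K.vsum z ≤ K.cost c) ∧
          t = ∑ v, w v * z v} m := by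
  classical
  by_cases hV : Nonempty V
  · haveI := hV
    have hcover : ∃ y : DiCircuit A →₀ ℕ, ∀ v, w v ≤ cov y v := by
      set g : V → (DiCircuit A →₀ ℕ) := fun v =>
        if h : 0 < w v then Finsupp.single (Classical.choose (hw v h)) (w v) else 0 with hg
      refine ⟨∑ v : V, g v, fun u => ?_⟩
      rw [cov_finset_sum]
      by_cases h : 0 < w u
      · have hterm : cov (g u) u = w u := by
          simp only [hg]
          rw [dif_pos h, cov_single, if_pos (Classical.choose_spec (hw u h))]
        calc w u = cov (g u) u := hterm.symm
          _ ≤ ∑ v : V, cov (g v) u :=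
            Finset.single_le_sum (f := fun v => cov (g v) u)
              (fun v _ => Nat.zero_le _) (Finset.mem_univ u)
      · omega
    obtain ⟨yc, hyc⟩ := hcover
    have hne : {t | ∃ y : DiCircuit A →₀ ℕ, (∀ v, w v ≤ cov y v) ∧ t = ycost c y}.Nonempty :=
      ⟨ycost c yc, yc, hyc, rfl⟩
    obtain ⟨y₀, hcov₀, hy₀⟩ :=
      Nat.sInf_mem hne
    have hmin : ∀ y' : DiCircuit A →₀ ℕ, (∀ v, w v ≤ cov y' v) → ycost c y₀ ≤ ycost c y' := by
      intro y' h'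
      have hmem2 : ycost c y' ∈ {t | ∃ y : DiCircuit A →₀ ℕ,
          (∀ v, w v ≤ cov y v) ∧ t = ycost c y} := ⟨y', h', rfl⟩
      have hle := Nat.sInf_le hmem2
      omega
    obtain ⟨z, hzind, hzval⟩ := exists_good_z A c w y₀ hcov₀ hmin
    refine ⟨sInf {t | ∃ y : DiCircuit A →₀ ℕ, (∀ v, w v ≤ cov y v) ∧ t = ycost c y},
      ⟨Nat.sInf_mem hne, fun t ht => Nat.sInf_le ht⟩,
      ⟨⟨z, hzind, ?_⟩, ?_⟩⟩
    · rw [hy₀, ← hzval]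
    · rintro s ⟨z', hz', rfl⟩
      calc (∑ v : V, w v * z' v) ≤ ycost c y₀ := weak_duality c w y₀ z' hcov₀ hz'
        _ = _ := hy₀.symm
  · haveI := not_nonempty_iff.mp hV
    refine ⟨0, ⟨⟨0, fun v => (IsEmpty.false v).elim, by simp⟩, fun t _ => Nat.zero_le t⟩,
      ⟨⟨fun _ => 0, fun K => (IsEmpty.false (K.f 0)).elim, by simp⟩, ?_⟩⟩
    rintro s ⟨z', -, rfl⟩
    simp
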